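/- arXiv:2307.05982 — 3 statements merged into one kernel-verified Lean document; each statement's English description precedes it below -/
import Mathlib

section
/- Let f : ℝ → ℝ be C¹ and A > 0 satisfy A = ∫_{-π}^{π} cos(y) f(A cos(y)) dy. Define L₀ψ = -ψ + ∫_{-π}^{π} cos(·-y) f'(A cos y) ψ(y) dy and γ = ∫_{-π}^{π} f'(A cos(x)) dx - 2. Then u₀(x) = A cos(x) satisfies L₀ u₀ = γ u₀, i.e. cos is an eigenfunction of L₀ with eigenvalue γ. -/
/-!
Write `I r = ∫ r y * f' (A cos y) dy` over `[-π, π]`. Expanding `cos (x - y) = cos x cos y + sin x sin y`,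
the `sin` part is the integral of an odd function and vanishes, so the integral term of `L₀ (A cos)` is
`A cos x · I (cos²) = A cos x · (I 1 - I (sin²))`. Integrating by parts,
`∫ cos y f (A cos y) dy = A · I (sin²)`, so the fixed-point equation for `A` says exactly `I (sin²) = 1`.
-/

open Real MeasureTheory

theorem intervalIntegral.integral_eq_zero_of_odd {g : ℝ → ℝ} (hg : Function.Odd g) (a : ℝ) :
    ∫ y in (-a)..a, g y = 0 := by
  have h := intervalIntegral.integral_comp_neg (a := -a) (b := a) g
  simp only [hg _, intervalIntegral.integral_neg, neg_neg] at h
  linarith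

theorem integral_sin_mul_comp_cos_eq_zero (h : ℝ → ℝ) :
    ∫ y in (-π)..π, sin y * h (cos y) = 0 :=
  intervalIntegral.integral_eq_zero_of_odd (fun y => by simp only [sin_neg, cos_neg]; ring) π

theorem integral_cos_sub_mul_comp_cos {h : ℝ → ℝ} (hh : Continuous h) (x : ℝ) :
    ∫ y in (-π)..π, cos (x - y) * h (cos y) = cos x * ∫ y in (-π)..π, cos y * h (cos y) := by
  calc ∫ y in (-π)..π, cos (x - y) * h (cos y)
      = ∫ y in (-π)..π, cos x * (cos y * h (cos y)) + sin x * (sin y * h (cos y)) := by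
        simp only [cos_sub, add_mul, mul_assoc]
    _ = cos x * ∫ y in (-π)..π, cos y * h (cos y) := by
        rw [intervalIntegral.integral_add, intervalIntegral.integral_const_mul,
          intervalIntegral.integral_const_mul, integral_sin_mul_comp_cos_eq_zero, mul_zero, add_zero]
        all_goals exact Continuous.intervalIntegrable (by fun_prop) _ _

theorem integral_cos_sq_mul {g : ℝ → ℝ} (hg : Continuous g) (a b : ℝ) :
    ∫ y in a..b, cos y ^ 2 * g y = (∫ y in a..b, g y) - ∫ y in a..b, sin y ^ 2 * g y := by
  rw [← intervalIntegral.integral_sub (hg.intervalIntegrable _ _)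
    (Continuous.intervalIntegrable (by fun_prop) _ _)]
  congr 1 with y
  linear_combination g y * cos_sq_add_sin_sq y

theorem integral_cos_mul_comp_const_mul_cos {f : ℝ → ℝ} (hf : ContDiff ℝ 1 f) (A : ℝ) :
    ∫ y in (-π)..π, cos y * f (A * cos y) = A * ∫ y in (-π)..π, sin y ^ 2 * deriv f (A * cos y) := by
  have hf' : Continuous (deriv f) := hf.continuous_deriv le_rfl
  have hu : ∀ y ∈ Set.uIcc (-π) π,
      HasDerivAt (fun y => f (A * cos y)) (deriv f (A * cos y) * (A * -sin y)) y := fun y _ =>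
    (hf.differentiable one_ne_zero _).hasDerivAt.comp y ((hasDerivAt_cos y).const_mul A)
  rw [← intervalIntegral.integral_const_mul]
  calc ∫ y in (-π)..π, cos y * f (A * cos y)
      = ∫ y in (-π)..π, f (A * cos y) * cos y := by simp only [mul_comm]
    _ = -∫ y in (-π)..π, deriv f (A * cos y) * (A * -sin y) * sin y := by
        rw [intervalIntegral.integral_mul_deriv_eq_deriv_mul hu (fun y _ => hasDerivAt_sin y)
          (Continuous.intervalIntegrable (by fun_prop) _ _) (continuous_cos.intervalIntegrable _ _)]
        simp only [sin_neg, sin_pi, neg_zero, mul_zero, sub_zero, zero_sub]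
    _ = ∫ y in (-π)..π, A * (sin y ^ 2 * deriv f (A * cos y)) := by
        rw [← intervalIntegral.integral_neg]
        congr 1 with y
        ring

theorem stmt_8_general (f : ℝ → ℝ) (hf : ContDiff ℝ 1 f) (A : ℝ)
    (hfix : A = ∫ y in (-π)..π, Real.cos y * f (A * Real.cos y)) :
    ∀ x : ℝ,
      -(A * Real.cos x) +
          (∫ y in (-π)..π, Real.cos (x - y) * deriv f (A * Real.cos y) * (A * Real.cos y)) =
        ((∫ y in (-π)..π, deriv f (A * Real.cos y)) - 2) * (A * Real.cos x) := by
  intro x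
  have hf' : Continuous (deriv f) := hf.continuous_deriv le_rfl
  have hsin : A * ∫ y in (-π)..π, sin y ^ 2 * deriv f (A * cos y) = A := by
    rw [← integral_cos_mul_comp_const_mul_cos hf, ← hfix]
  have hexpand := integral_cos_sub_mul_comp_cos (h := fun t => deriv f (A * t) * (A * t))
    (by fun_prop) x
  have hcos : ∫ y in (-π)..π, cos y * (deriv f (A * cos y) * (A * cos y))
      = A * ∫ y in (-π)..π, cos y ^ 2 * deriv f (A * cos y) := by
    rw [← intervalIntegral.integral_const_mul]
    congr 1 with y
    ring
  simp only [mul_assoc] at hexpand ⊢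
  rw [hexpand, hcos, integral_cos_sq_mul (by fun_prop), mul_sub, hsin]
  ring

theorem stmt_8 (f : ℝ → ℝ) (hf : ContDiff ℝ 1 f) (A : ℝ) (hA : 0 < A)
    (hfix : A = ∫ y in (-π)..π, Real.cos y * f (A * Real.cos y)) :
    ∀ x : ℝ,
      -(A * Real.cos x) +
          (∫ y in (-π)..π, Real.cos (x - y) * deriv f (A * Real.cos y) * (A * Real.cos y)) =
        ((∫ y in (-π)..π, deriv f (A * Real.cos y)) - 2) * (A * Real.cos x) :=
  stmt_8_general f hf A hfix
end

section
/- Let f : ℝ → ℝ be C¹, A > 0 with A = ∫_{-π}^{π} cos(y) f(A cos(y)) dy, and L₀ ψ = -ψ + ∫_{-π}^{π} cos(·-y) f'(A cos y) ψ(y) dy. If ψ ∈ L²([-π,π]) satisfies ∫_{-π}^{π} cos(y) f'(A cos y) ψ(y) dy = 0 and ∫_{-π}^{π} sin(y) f'(A cos y) ψ(y) dy = 0, then L₀ ψ = -ψ. Consequently the spectrum of L₀ consists exactly of the eigenvalues -1, 0 and γ = ∫ f'(A cos) - 2 (when these are distinct), with eigenspaces for 0 and γ spanned respectively by sin and cos.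 -/
/-!
For the even weight `w y = f'(A cos y)` the operator `ψ ↦ ∫ cos (· - y) w y ψ y` has range in
`span {cos, sin}`, and it acts diagonally there: the cross moment `∫ sin cos w` vanishes by parity,
while integrating by parts against the fixed-point equation for `A` gives `∫ sin² w = 1`, hence
`∫ cos² w = ∫ w - 1`. An eigenfunction for `λ` therefore satisfies `(λ + 1) ψ = a cos + b sin` with
`(λ + 1) a = (∫ w - 1) a` and `(λ + 1) b = b`, which leaves only the eigenvalues `-1`, `0`
and `∫ w - 2`.
-/

open Real MeasureTheory

theorem integral_eq_zero_of_odd {h : ℝ → ℝ} (hodd : ∀ x, h (-x) = -h x) (a : ℝ) :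
    ∫ x in (-a)..a, h x = 0 := by
  have hflip : ∫ x in (-a)..a, h (-x) = ∫ x in (-a)..a, h x := by
    rw [intervalIntegral.integral_comp_neg, neg_neg]
  simp_rw [hodd, intervalIntegral.integral_neg] at hflip
  linarith

/-- `A₀(ψ)` in the paper's notation, for the weight `w y = f'(A cos y)`. -/
noncomputable def cosMoment (w ψ : ℝ → ℝ) : ℝ := ∫ y in (-π)..π, cos y * w y * ψ y

/-- `B₀(ψ)` in the paper's notation. -/
noncomputable def sinMoment (w ψ : ℝ → ℝ) : ℝ := ∫ y in (-π)..π, sin y * w y * ψ y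

section Moments

variable {w ψ : ℝ → ℝ}

theorem integral_cos_sub_mul_mul (hw : Continuous w) (hψ : Continuous ψ) (x : ℝ) :
    ∫ y in (-π)..π, cos (x - y) * w y * ψ y =
      cos x * cosMoment w ψ + sin x * sinMoment w ψ := by
  have hsplit : ∀ y, cos (x - y) * w y * ψ y =
      cos x * (cos y * w y * ψ y) + sin x * (sin y * w y * ψ y) := fun y => by
    rw [cos_sub]; ring
  simp_rw [hsplit]
  rw [intervalIntegral.integral_add, intervalIntegral.integral_const_mul,
    intervalIntegral.integral_const_mul, cosMoment, sinMoment]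
  all_goals exact (by fun_prop : Continuous _).intervalIntegrable _ _

variable {lam : ℝ}

theorem mul_eigenfunction_eq_moments (hw : Continuous w) (hψ : Continuous ψ)
    (heig : ∀ x, -ψ x + ∫ y in (-π)..π, cos (x - y) * w y * ψ y = lam * ψ x) (x : ℝ) :
    (lam + 1) * ψ x = cosMoment w ψ * cos x + sinMoment w ψ * sin x := by
  have := heig x
  rw [integral_cos_sub_mul_mul hw hψ] at this
  linarith

theorem mul_integral_eigenfunction (hw : Continuous w) (hψ : Continuous ψ)
    (heig : ∀ x, -ψ x + ∫ y in (-π)..π, cos (x - y) * w y * ψ y = lam * ψ x)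
    {u : ℝ → ℝ} (hu : Continuous u) :
    (lam + 1) * ∫ y in (-π)..π, u y * w y * ψ y =
      cosMoment w ψ * (∫ y in (-π)..π, u y * cos y * w y) +
        sinMoment w ψ * ∫ y in (-π)..π, u y * sin y * w y := by
  rw [← intervalIntegral.integral_const_mul, ← intervalIntegral.integral_const_mul,
    ← intervalIntegral.integral_const_mul, ← intervalIntegral.integral_add
      ((by fun_prop : Continuous _).intervalIntegrable _ _)
      ((by fun_prop : Continuous _).intervalIntegrable _ _)]
  congr 1 with y
  linear_combination u y * w y * mul_eigenfunction_eq_moments hw hψ heig y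

theorem eigen_moments_of_even (hw : Continuous w) (hw_even : ∀ y, w (-y) = w y)
    (hψ : Continuous ψ)
    (heig : ∀ x, -ψ x + ∫ y in (-π)..π, cos (x - y) * w y * ψ y = lam * ψ x) :
    (lam + 1) * cosMoment w ψ = (∫ y in (-π)..π, cos y * cos y * w y) * cosMoment w ψ ∧
      (lam + 1) * sinMoment w ψ = (∫ y in (-π)..π, sin y * sin y * w y) * sinMoment w ψ := by
  have hcross : ∫ y in (-π)..π, cos y * sin y * w y = 0 :=
    integral_eq_zero_of_odd (fun y => by rw [cos_neg, sin_neg, hw_even]; ring) π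
  have hcross' : ∫ y in (-π)..π, sin y * cos y * w y = 0 := by
    simpa only [mul_comm (cos _) (sin _)] using hcross
  have hc := mul_integral_eigenfunction hw hψ heig continuous_cos
  have hs := mul_integral_eigenfunction hw hψ heig continuous_sin
  rw [hcross, mul_zero, add_zero, mul_comm (cosMoment w ψ)] at hc
  rw [hcross', mul_zero, zero_add, mul_comm (sinMoment w ψ)] at hs
  exact ⟨hc, hs⟩

theorem integral_cos_mul_cos_mul (hw : Continuous w) :
    ∫ y in (-π)..π, cos y * cos y * w y =
      (∫ y in (-π)..π, w y) - ∫ y in (-π)..π, sin y * sin y * w y := by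
  rw [← intervalIntegral.integral_sub (hw.intervalIntegrable _ _)
    ((by fun_prop : Continuous _).intervalIntegrable _ _)]
  congr 1 with y
  linear_combination w y * cos_sq_add_sin_sq y

end Moments

/-- Integration by parts of `(sin y · f (A cos y))' = cos y · f (A cos y) - A sin² y · f'(A cos y)`
over a period. -/
theorem mul_integral_sin_mul_sin_mul_deriv {f : ℝ → ℝ} (hf : ContDiff ℝ 1 f) (A : ℝ) :
    A * ∫ y in (-π)..π, sin y * sin y * deriv f (A * cos y) =
      ∫ y in (-π)..π, cos y * f (A * cos y) := by
  have hderiv : ∀ y ∈ Set.uIcc (-π) π, HasDerivAt (fun y => sin y * f (A * cos y))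
      (cos y * f (A * cos y) - A * (sin y * sin y * deriv f (A * cos y))) y := fun y _ => by
    have hinner : HasDerivAt (fun y => A * cos y) (A * -sin y) y :=
      (hasDerivAt_cos y).const_mul A
    refine ((hasDerivAt_sin y).mul
      (((hf.differentiable one_ne_zero) (A * cos y)).hasDerivAt.comp y hinner)).congr_deriv ?_
    simp only [Function.comp_apply]
    ring
  have hcont : Continuous (deriv f) := hf.continuous_deriv le_rfl
  have hftc := intervalIntegral.integral_eq_sub_of_hasDerivAt hderiv
    ((by fun_prop : Continuous _).intervalIntegrable _ _)
  rw [intervalIntegral.integral_sub ((by fun_prop : Continuous _).intervalIntegrable _ _)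
    ((by fun_prop : Continuous _).intervalIntegrable _ _),
    intervalIntegral.integral_const_mul] at hftc
  simp only [sin_pi, sin_neg, neg_zero, zero_mul, sub_zero] at hftc
  linarith

theorem exists_coeffs_of_eigen {f : ℝ → ℝ} (hf : ContDiff ℝ 1 f) {A : ℝ} (hA : A ≠ 0)
    (hfix : A = ∫ y in (-π)..π, cos y * f (A * cos y)) {lam : ℝ} {ψ : ℝ → ℝ}
    (hψ : Continuous ψ)
    (heig : ∀ x, -ψ x + ∫ y in (-π)..π, cos (x - y) * deriv f (A * cos y) * ψ y = lam * ψ x) :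
    ∃ a b : ℝ, (∀ x, (lam + 1) * ψ x = a * cos x + b * sin x) ∧
      (lam + 1) * a = ((∫ y in (-π)..π, deriv f (A * cos y)) - 1) * a ∧ lam * b = 0 := by
  set w : ℝ → ℝ := fun y => deriv f (A * cos y)
  have hw : Continuous w := by have := hf.continuous_deriv le_rfl; fun_prop
  have hsin : ∫ y in (-π)..π, sin y * sin y * w y = 1 := by
    have := mul_integral_sin_mul_sin_mul_deriv hf A
    rw [← hfix] at this
    exact (mul_eq_left₀ hA).mp this
  obtain ⟨hcos, hsin'⟩ :=
    eigen_moments_of_even hw (fun y => by simp only [w, cos_neg]) hψ heig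
  rw [integral_cos_mul_cos_mul hw, hsin] at hcos
  rw [hsin] at hsin'
  exact ⟨_, _, mul_eigenfunction_eq_moments hw hψ heig, hcos, by linarith⟩

theorem stmt_9 (f : ℝ → ℝ) (hf : ContDiff ℝ 1 f) (A : ℝ) (hA : 0 < A)
    (hfix : A = ∫ y in (-π)..π, Real.cos y * f (A * Real.cos y)) :
    -- if ψ is orthogonal (with weight f'(A cos)) to cos and sin, then L₀ ψ = -ψ
    (∀ ψ : ℝ → ℝ, Continuous ψ →
      (∫ y in (-π)..π, Real.cos y * deriv f (A * Real.cos y) * ψ y) = 0 →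
      (∫ y in (-π)..π, Real.sin y * deriv f (A * Real.cos y) * ψ y) = 0 →
      ∀ x : ℝ,
        -ψ x + (∫ y in (-π)..π, Real.cos (x - y) * deriv f (A * Real.cos y) * ψ y) =
          -ψ x) ∧
    -- the only eigenvalues of L₀ are -1, 0 and γ = I(1) - 2
    (∀ (lam : ℝ) (ψ : ℝ → ℝ), Continuous ψ → (∃ x, ψ x ≠ 0) →
      (∀ x : ℝ,
        -ψ x + (∫ y in (-π)..π, Real.cos (x - y) * deriv f (A * Real.cos y) * ψ y) =
          lam * ψ x) →
      lam = -1 ∨ lam = 0 ∨ lam = (∫ y in (-π)..π, deriv f (A * Real.cos y)) - 2) ∧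
    -- the eigenspace for 0 is spanned by sin
    (((∫ y in (-π)..π, deriv f (A * Real.cos y)) - 2) ≠ 0 →
      ∀ ψ : ℝ → ℝ, Continuous ψ →
      (∀ x : ℝ,
        -ψ x + (∫ y in (-π)..π, Real.cos (x - y) * deriv f (A * Real.cos y) * ψ y) =
          0 * ψ x) →
      ∃ c : ℝ, ∀ x : ℝ, ψ x = c * Real.sin x) ∧
    -- the eigenspace for γ is spanned by cos
    (((∫ y in (-π)..π, deriv f (A * Real.cos y)) - 2) ≠ 0 →
      ((∫ y in (-π)..π, deriv f (A * Real.cos y)) - 2) ≠ -1 →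
      ∀ ψ : ℝ → ℝ, Continuous ψ →
      (∀ x : ℝ,
        -ψ x + (∫ y in (-π)..π, Real.cos (x - y) * deriv f (A * Real.cos y) * ψ y) =
          ((∫ y in (-π)..π, deriv f (A * Real.cos y)) - 2) * ψ x) →
      ∃ c : ℝ, ∀ x : ℝ, ψ x = c * Real.cos x) := by
  have hw : Continuous fun y => deriv f (A * cos y) := by
    have := hf.continuous_deriv le_rfl; fun_prop
  refine ⟨fun ψ hψ hc hs x => ?_, fun lam ψ hψ ⟨x₀, hx₀⟩ heig => ?_,
    fun hγ ψ hψ heig => ?_, fun hγ hγ₁ ψ hψ heig => ?_⟩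
  · rw [integral_cos_sub_mul_mul hw hψ, cosMoment, sinMoment, hc, hs]; ring
  · obtain ⟨a, b, hψab, ha, hb⟩ := exists_coeffs_of_eigen hf hA.ne' hfix hψ heig
    by_contra! hne
    have hb0 : b = 0 := (mul_eq_zero.mp hb).resolve_left hne.2.1
    have ha0 : a = 0 := by
      by_contra ha0
      exact hne.2.2 (by linarith [mul_right_cancel₀ ha0 ha])
    have hzero : (lam + 1) * ψ x₀ = 0 := by rw [hψab x₀, ha0, hb0]; ring
    exact hx₀ ((mul_eq_zero.mp hzero).resolve_left fun h => hne.1 (by linarith))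
  · obtain ⟨a, b, hψab, ha, -⟩ := exists_coeffs_of_eigen hf hA.ne' hfix hψ heig
    have ha0 : a = 0 := (mul_eq_zero.mp (by linear_combination -ha)).resolve_left hγ
    exact ⟨b, fun x => by simpa [ha0] using hψab x⟩
  · obtain ⟨a, b, hψab, -, hb⟩ := exists_coeffs_of_eigen hf hA.ne' hfix hψ heig
    have hb0 : b = 0 := (mul_eq_zero.mp hb).resolve_left hγ
    have hγ₁' : (∫ y in (-π)..π, deriv f (A * cos y)) - 2 + 1 ≠ 0 := fun h =>
      hγ₁ (by linarith)
    refine ⟨a / ((∫ y in (-π)..π, deriv f (A * cos y)) - 2 + 1), fun x => ?_⟩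
    rw [div_mul_eq_mul_div, eq_div_iff hγ₁', mul_comm, hψab x, hb0]
    ring
end

section
/- Let A > 0, f : ℝ → ℝ be C¹, u_φ(x) = A cos(x+φ), v_φ(x) = -A sin(x+φ), and suppose A = ∫_{-π}^{π} cos(y) f(A cos y) dy. Then for x_i = 2πi/N - π and B_{N,i} = (x_{i-1}, x_i], Σ_{i=1}^N sin(x_i + φ) ∫_{B_{N,i}} v_φ(y) f'(u_φ(y)) dy = -A + o(1/N) as N → ∞, uniformly in φ. -/
open Real MeasureTheory
open Set
open scoped NNReal

/-!
Write `F y = v_φ(y) f'(u_φ(y))` and `h = 2π/N`. On a cell `[x_{i-1}, x_i]`, Taylor expansion gives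
`sin (x_i + φ) - sin (y + φ) = (x_i - y) cos (y + φ) + O(h²)`, and replacing the weight `x_i - y` by
its mean `h/2` costs `O(h · ω(h))`, where `ω` is a modulus of continuity of `cos (· + φ) * F`.
Summing over the cells,
`∑ sin (x_i + φ) ∫_{B_{N,i}} F = ∫ sin (· + φ) F + (h/2) ∫ cos (· + φ) F + o(1/N)`.
Integration by parts and the fixed-point identity give `∫ sin (· + φ) F = -A`, and
`∫ cos (· + φ) F = 0` because the integrand has the form `ψ (cos s) * sin s`. Everything is uniform
in `φ` since all integrands are translates of `2π`-periodic continuous functions, whose bounds and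
moduli of continuity are global.
-/

theorem Function.Periodic.uniformContinuous_of_continuous {α : Type*} [PseudoMetricSpace α]
    {f : ℝ → α} {c : ℝ} (hp : Function.Periodic f c) (hc : 0 < c) (hf : Continuous f) :
    UniformContinuous f := by
  rw [Metric.uniformContinuous_iff_le]
  intro ε hε
  obtain ⟨δ, hδ, hfδ⟩ := Metric.uniformContinuousOn_iff_le.1
    ((isCompact_Icc (a := -c) (b := 2 * c)).uniformContinuousOn_of_continuous hf.continuousOn) ε hε
  refine ⟨min δ c, by positivity, fun s t hst => ?_⟩
  -- translate `s` and `t` by the same multiple of `c` so that both land in `[-c, 2c]`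
  obtain ⟨hs₀, hs₁⟩ := sub_toIcoDiv_zsmul_mem_Ico hc 0 s
  have hst' : |(s - toIcoDiv hc 0 s • c) - (t - toIcoDiv hc 0 s • c)| ≤ min δ c := by
    rwa [sub_sub_sub_cancel_right, ← Real.dist_eq]
  have hts := abs_le.1 (hst'.trans (min_le_right δ c))
  have := hfδ _ (Ico_subset_Icc_self.trans (Icc_subset_Icc (by linarith) (by linarith)) ⟨hs₀, hs₁⟩)
    (t - toIcoDiv hc 0 s • c) ⟨by linarith, by linarith⟩
    ((Real.dist_eq _ _).trans_le (hst'.trans (min_le_left δ c)))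
  rwa [hp.sub_zsmul_eq, hp.sub_zsmul_eq] at this

theorem abs_sub_sub_mul_le_of_lipschitzWith {g g' : ℝ → ℝ} {L : ℝ≥0}
    (hg : ∀ t, HasDerivAt g (g' t) t) (hg' : LipschitzWith L g') {y b : ℝ} (hyb : y ≤ b) :
    |g b - g y - (b - y) * g' y| ≤ L * (b - y) ^ 2 := by
  have hderiv : ∀ t ∈ Icc y b,
      HasDerivWithinAt (fun t => g t - t * g' y) (g' t - g' y) (Icc y b) t := fun t _ =>
    ((hg t).sub ((hasDerivAt_id t).mul_const (g' y))).hasDerivWithinAt.congr_deriv (by simp)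
  have hbound : ∀ t ∈ Ico y b, ‖g' t - g' y‖ ≤ L * (b - y) := fun t ht => by
    rw [← dist_eq_norm]
    refine (hg'.dist_le_mul t y).trans (mul_le_mul_of_nonneg_left ?_ L.2)
    rw [Real.dist_eq, abs_of_nonneg (by linarith [ht.1])]
    linarith [ht.2]
  have := norm_image_sub_le_of_norm_deriv_le_segment' hderiv hbound b ⟨hyb, le_rfl⟩
  rw [Real.norm_eq_abs] at this
  calc |g b - g y - (b - y) * g' y| = |g b - b * g' y - (g y - y * g' y)| := by ring_nf
    _ ≤ L * (b - y) * (b - y) := this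
    _ = L * (b - y) ^ 2 := by ring

theorem integral_midpoint_sub_eq_zero (c h : ℝ) : ∫ y in c..c + h, (c + h / 2 - y) = 0 := by
  rw [intervalIntegral.integral_sub intervalIntegrable_const intervalIntegral.intervalIntegrable_id,
    intervalIntegral.integral_const, integral_id, smul_eq_mul]
  ring

section RiemannSum

variable {g g' F : ℝ → ℝ} {L : ℝ≥0} {h M ε : ℝ}

theorem abs_integral_sub_mul_sub_half_le (hg : ∀ t, HasDerivAt g (g' t) t)
    (hg' : LipschitzWith L g') (hF : Continuous F) {c : ℝ} (hh : 0 ≤ h)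
    (hFM : ∀ y ∈ Icc c (c + h), |F y| ≤ M)
    (hgF : ∀ y ∈ Icc c (c + h), |g' y * F y - g' c * F c| ≤ ε) :
    |(∫ y in c..c + h, (g (c + h) - g y) * F y) - h / 2 * ∫ y in c..c + h, g' y * F y|
      ≤ h * (L * h ^ 2 * M + h / 2 * ε) := by
  have hgc : Continuous g := continuous_iff_continuousAt.2 fun t => (hg t).continuousAt
  have hg'c := hg'.continuous
  have hsplit : (∫ y in c..c + h, (g (c + h) - g y) * F y) - h / 2 * ∫ y in c..c + h, g' y * F y
      = ∫ y in c..c + h, ((g (c + h) - g y - (c + h - y) * g' y) * F y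
          + (c + h / 2 - y) * (g' y * F y - g' c * F c)) := by
    have hmid := integral_midpoint_sub_eq_zero c h
    rw [← intervalIntegral.integral_const_mul,
      ← intervalIntegral.integral_sub (by apply Continuous.intervalIntegrable; fun_prop)
        (by apply Continuous.intervalIntegrable; fun_prop),
      ← sub_zero (∫ y in c..c + h, _), ← mul_zero (g' c * F c), ← hmid,
      ← intervalIntegral.integral_const_mul,
      ← intervalIntegral.integral_sub (by apply Continuous.intervalIntegrable; fun_prop)
        (by apply Continuous.intervalIntegrable; fun_prop)]
    congr 1 with y
    ring
  rw [hsplit]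
  have hpt : ∀ y ∈ uIoc c (c + h), ‖(g (c + h) - g y - (c + h - y) * g' y) * F y
      + (c + h / 2 - y) * (g' y * F y - g' c * F c)‖ ≤ L * h ^ 2 * M + h / 2 * ε := by
    intro y hy
    rw [uIoc_of_le (by linarith)] at hy
    have hyI : y ∈ Icc c (c + h) := Ioc_subset_Icc_self hy
    have htaylor := abs_sub_sub_mul_le_of_lipschitzWith hg hg' hy.2
    rw [Real.norm_eq_abs]
    refine (abs_add_le _ _).trans (add_le_add ?_ ?_) <;> rw [abs_mul]
    · refine mul_le_mul (htaylor.trans ?_) (hFM y hyI) (abs_nonneg _) (by positivity)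
      gcongr
      · linarith [hy.2]
      · linarith [hy.1]
    · exact mul_le_mul (abs_le.2 ⟨by linarith [hy.2], by linarith [hy.1]⟩) (hgF y hyI)
        (abs_nonneg _) (by positivity)
  have := intervalIntegral.norm_integral_le_of_norm_le_const hpt
  rw [Real.norm_eq_abs, add_sub_cancel_left, abs_of_nonneg hh] at this
  exact this.trans_eq (mul_comm _ _)

theorem abs_sum_mul_integral_sub_le (hg : ∀ t, HasDerivAt g (g' t) t)
    (hg' : LipschitzWith L g') (hF : Continuous F) (hh : 0 ≤ h) (hFM : ∀ y, |F y| ≤ M)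
    (hgF : ∀ y z, |y - z| ≤ h → |g' y * F y - g' z * F z| ≤ ε) (a : ℝ) (N : ℕ) :
    |∑ i ∈ Finset.range N, g (a + (i + 1) * h) * (∫ y in a + i * h..a + (i + 1) * h, F y)
        - (∫ y in a..a + N * h, g y * F y) - h / 2 * ∫ y in a..a + N * h, g' y * F y|
      ≤ N * (h * (L * h ^ 2 * M + h / 2 * ε)) := by
  have hgc : Continuous g := continuous_iff_continuousAt.2 fun t => (hg t).continuousAt
  have hg'c := hg'.continuous
  have hadj : ∀ G : ℝ → ℝ, Continuous G →
      ∫ y in a..a + N * h, G y = ∑ i ∈ Finset.range N, ∫ y in a + i * h..a + i * h + h, G y := by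
    intro G hG
    have := intervalIntegral.sum_integral_adjacent_intervals (a := fun i : ℕ => a + i * h)
      (n := N) (μ := volume) (fun i _ => hG.intervalIntegrable _ _)
    simp only [Nat.cast_zero, zero_mul, add_zero, Nat.cast_succ] at this
    rw [← this]
    congr 1 with i
    ring_nf
  rw [hadj _ (by fun_prop), hadj _ (by fun_prop), Finset.mul_sum, ← Finset.sum_sub_distrib,
    ← Finset.sum_sub_distrib]
  refine (Finset.abs_sum_le_sum_abs _ _).trans ?_
  calc _ ≤ ∑ _i ∈ Finset.range N, h * (L * h ^ 2 * M + h / 2 * ε) := by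
        refine Finset.sum_le_sum fun i _ => ?_
        have hc : a + (i + 1) * h = a + i * h + h := by ring
        rw [hc, ← intervalIntegral.integral_const_mul, ← intervalIntegral.integral_sub
          (by apply Continuous.intervalIntegrable; fun_prop)
          (by apply Continuous.intervalIntegrable; fun_prop)]
        simp only [← sub_mul]
        refine abs_integral_sub_mul_sub_half_le hg hg' hF hh (fun y _ => hFM y)
          fun y hy => hgF y _ ?_
        rw [abs_of_nonneg (by linarith [hy.1])]
        linarith [hy.2]
    _ = N * (h * (L * h ^ 2 * M + h / 2 * ε)) := by simp

end RiemannSum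

theorem Function.Periodic.integral_mul_deriv_eq_neg {u u' v v' : ℝ → ℝ} {T : ℝ}
    (hu : Function.Periodic u T) (hv : Function.Periodic v T) (hu' : ∀ x, HasDerivAt u (u' x) x)
    (hv' : ∀ x, HasDerivAt v (v' x) x) (hu'c : Continuous u') (hv'c : Continuous v') (a : ℝ) :
    ∫ x in a..a + T, u x * v' x = -∫ x in a..a + T, u' x * v x := by
  rw [intervalIntegral.integral_mul_deriv_eq_deriv_mul (fun x _ => hu' x) (fun x _ => hv' x)
    (hu'c.intervalIntegrable _ _) (hv'c.intervalIntegrable _ _), hu a, hv a, sub_self, zero_sub]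

theorem integral_comp_cos_mul_sin_eq_zero {ψ : ℝ → ℝ} (hψ : Continuous ψ) (a : ℝ) :
    ∫ x in a..a + 2 * π, ψ (cos x) * sin x = 0 := by
  -- substitute `u = cos x`: both endpoints are mapped to `cos a`
  have := intervalIntegral.integral_comp_mul_deriv (a := a) (b := a + 2 * π)
    (fun x _ => hasDerivAt_cos x) (continuous_sin.neg.continuousOn) hψ
  rw [cos_add_two_pi, intervalIntegral.integral_same] at this
  simpa [intervalIntegral.integral_neg] using this

theorem hasDerivAt_comp_const_mul_cos {f : ℝ → ℝ} (hf : Differentiable ℝ f) (A x : ℝ) :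
    HasDerivAt (fun x => f (A * cos x)) (-(A * sin x) * deriv f (A * cos x)) x :=
  ((hf _).hasDerivAt.comp x ((hasDerivAt_cos x).const_mul A)).congr_deriv (by ring)

section FixedPoint

variable {f : ℝ → ℝ} {A : ℝ}

theorem integral_sin_add_mul_deriv_eq_neg (hf : ContDiff ℝ 1 f)
    (hfix : A = ∫ y in (-π)..π, cos y * f (A * cos y)) (φ : ℝ) :
    ∫ y in (-π)..π, sin (y + φ) * (-(A * sin (y + φ)) * deriv f (A * cos (y + φ))) = -A := by
  have hf' := hf.continuous_deriv le_rfl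
  have hfc := hf.continuous
  have hperiodic : Function.Periodic (fun x => f (A * cos x)) (2 * π) := fun x => by
    simp only [cos_add_two_pi]
  calc ∫ y in (-π)..π, sin (y + φ) * (-(A * sin (y + φ)) * deriv f (A * cos (y + φ)))
      = ∫ x in (-π + φ)..(-π + φ) + 2 * π, sin x * (-(A * sin x) * deriv f (A * cos x)) := by
        rw [intervalIntegral.integral_comp_add_right
          (fun x => sin x * (-(A * sin x) * deriv f (A * cos x)))]
        ring_nf
    _ = -∫ x in (-π + φ)..(-π + φ) + 2 * π, cos x * f (A * cos x) :=
        sin_periodic.integral_mul_deriv_eq_neg hperiodic hasDerivAt_sin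
          (hasDerivAt_comp_const_mul_cos (hf.differentiable one_ne_zero) A) continuous_cos
          (by fun_prop) _
    _ = -∫ x in (-π)..(-π) + 2 * π, cos x * f (A * cos x) := by
        have := (cos_periodic.mul hperiodic).intervalIntegral_add_eq (-π + φ) (-π)
        simp only [Pi.mul_apply] at this
        rw [this]
    _ = -A := by rw [show -π + 2 * π = π by ring, ← hfix]

theorem integral_cos_add_mul_deriv_eq_zero (hf : ContDiff ℝ 1 f) (φ : ℝ) :
    ∫ y in (-π)..π, cos (y + φ) * (-(A * sin (y + φ)) * deriv f (A * cos (y + φ))) = 0 := by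
  have hf' := hf.continuous_deriv le_rfl
  calc ∫ y in (-π)..π, cos (y + φ) * (-(A * sin (y + φ)) * deriv f (A * cos (y + φ)))
      = ∫ x in (-π + φ)..(-π + φ) + 2 * π, -(A * cos x * deriv f (A * cos x)) * sin x := by
        rw [show -π + φ + 2 * π = π + φ by ring, ← intervalIntegral.integral_comp_add_right
          (fun x => -(A * cos x * deriv f (A * cos x)) * sin x)]
        congr 1 with y
        ring
    _ = 0 := integral_comp_cos_mul_sin_eq_zero (ψ := fun c => -(A * c * deriv f (A * c)))
        (by fun_prop) _

end FixedPoint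

theorem abs_riemann_sum_add_le {f : ℝ → ℝ} {A : ℝ} (hf : ContDiff ℝ 1 f)
    (hfix : A = ∫ y in (-π)..π, cos y * f (A * cos y)) {N : ℕ} (hN : N ≠ 0) (φ : ℝ) {M ε : ℝ}
    (hM : ∀ x, |-(A * sin x) * deriv f (A * cos x)| ≤ M)
    (hε : ∀ x y, |x - y| ≤ 2 * π / N → |cos x * (-(A * sin x) * deriv f (A * cos x))
      - cos y * (-(A * sin y) * deriv f (A * cos y))| ≤ ε) :
    |(∑ i ∈ Finset.Icc 1 N, sin ((2 * π * (i : ℝ) / (N : ℝ) - π) + φ) *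
          ∫ y in (2 * π * ((i : ℝ) - 1) / (N : ℝ) - π)..(2 * π * (i : ℝ) / (N : ℝ) - π),
            (-(A * sin (y + φ))) * deriv f (A * cos (y + φ))) + A|
      ≤ N * (2 * π / N * (1 * (2 * π / N) ^ 2 * M + 2 * π / N / 2 * ε)) := by
  have hf' := hf.continuous_deriv le_rfl
  have key := abs_sum_mul_integral_sub_le (h := 2 * π / N) (g := fun y => sin (y + φ))
    (g' := fun y => cos (y + φ)) (F := fun y => -(A * sin (y + φ)) * deriv f (A * cos (y + φ)))
    (L := 1) (fun y => ((hasDerivAt_id y).add_const φ).sin.congr_deriv (mul_one _))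
    (by simpa [Function.comp_def] using lipschitzWith_cos.comp (isometry_add_right φ).lipschitz)
    (by fun_prop) (by positivity) (fun y => hM _)
    (fun y z hyz => hε _ _ (by rwa [add_sub_add_right_eq_sub])) (-π) N
  have hend : -π + N * (2 * π / N) = π := by field_simp; ring
  rw [hend, integral_sin_add_mul_deriv_eq_neg hf hfix, integral_cos_add_mul_deriv_eq_zero hf,
    mul_zero, sub_zero, sub_neg_eq_add, NNReal.coe_one] at key
  convert key using 3
  rw [← Finset.Ico_add_one_right_eq_Icc, Finset.sum_Ico_eq_sum_range, Nat.add_sub_cancel]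
  refine Finset.sum_congr rfl fun k _ => ?_
  have hright : 2 * π * ((1 + k : ℕ) : ℝ) / N - π = -π + (k + 1) * (2 * π / N) := by
    push_cast; ring
  have hleft : 2 * π * (((1 + k : ℕ) : ℝ) - 1) / N - π = -π + k * (2 * π / N) := by
    push_cast; ring
  rw [hright, hleft]

theorem stmt_15_general (f : ℝ → ℝ) (hf : ContDiff ℝ 1 f) (A : ℝ)
    (hfix : A = ∫ y in (-π)..π, Real.cos y * f (A * Real.cos y)) :
    ∀ ε > (0 : ℝ), ∃ N₀ : ℕ, ∀ N : ℕ, N₀ ≤ N → 1 ≤ N → ∀ φ : ℝ,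
      |(∑ i ∈ Finset.Icc 1 N, Real.sin ((2 * π * (i : ℝ) / (N : ℝ) - π) + φ) *
            ∫ y in (2 * π * ((i : ℝ) - 1) / (N : ℝ) - π)..(2 * π * (i : ℝ) / (N : ℝ) - π),
              (-(A * Real.sin (y + φ))) * deriv f (A * Real.cos (y + φ)))
          + A|
        ≤ ε / (N : ℝ) := by
  intro ε hε
  have hf' := hf.continuous_deriv le_rfl
  obtain ⟨M, hM⟩ := isBounded_iff_forall_norm_le.1
    ((show Function.Periodic (fun x => -(A * sin x) * deriv f (A * cos x)) (2 * π) from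
      fun x => by simp only [sin_add_two_pi, cos_add_two_pi]).isBounded_of_continuous
      two_pi_pos.ne' (by fun_prop))
  obtain ⟨δ, hδ, hk⟩ := Metric.uniformContinuous_iff_le.1
    ((show Function.Periodic (fun x => cos x * (-(A * sin x) * deriv f (A * cos x))) (2 * π) from
      fun x => by simp only [sin_add_two_pi, cos_add_two_pi]).uniformContinuous_of_continuous
      two_pi_pos (by fun_prop)) (ε / (4 * π ^ 2)) (by positivity)
  refine ⟨⌈2 * π / δ⌉₊ + ⌈16 * π ^ 3 * M / ε⌉₊, fun N hN hN1 φ => ?_⟩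
  have hNpos : (0 : ℝ) < N := by exact_mod_cast hN1
  have hNδ : 2 * π / N ≤ δ := by
    rw [div_le_iff₀ hNpos, ← div_le_iff₀' hδ]
    exact (Nat.le_ceil _).trans (by exact_mod_cast (Nat.le_add_right _ _).trans hN)
  have hNM : 16 * π ^ 3 * M ≤ ε * N := by
    rw [← div_le_iff₀' hε]
    exact (Nat.le_ceil _).trans (by exact_mod_cast (Nat.le_add_left _ _).trans hN)
  refine (abs_riemann_sum_add_le hf hfix (by omega) φ (fun x => hM _ (mem_range_self x))
    fun x y hxy => hk (hxy.trans hNδ)).trans ?_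
  calc _ = (8 * π ^ 3 * M / N + ε / 2) / N := by field_simp; ring
    _ ≤ (ε / 2 + ε / 2) / N := by
      refine div_le_div_of_nonneg_right (add_le_add_left ?_ _) hNpos.le
      rw [div_le_iff₀ hNpos]
      linarith
    _ = ε / N := by ring

theorem stmt_15 (f : ℝ → ℝ) (hf : ContDiff ℝ 1 f) (A : ℝ) (hA : 0 < A)
    (hfix : A = ∫ y in (-π)..π, Real.cos y * f (A * Real.cos y)) :
    ∀ ε > (0 : ℝ), ∃ N₀ : ℕ, ∀ N : ℕ, N₀ ≤ N → 1 ≤ N → ∀ φ : ℝ,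
      |(∑ i ∈ Finset.Icc 1 N, Real.sin ((2 * π * (i : ℝ) / (N : ℝ) - π) + φ) *
            ∫ y in (2 * π * ((i : ℝ) - 1) / (N : ℝ) - π)..(2 * π * (i : ℝ) / (N : ℝ) - π),
              (-(A * Real.sin (y + φ))) * deriv f (A * Real.cos (y + φ)))
          + A|
        ≤ ε / (N : ℝ) :=
  stmt_15_general f hf A hfix
end
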